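/- arXiv:2308.04143 — 2 statements merged into one kernel-verified Lean document; each statement's English description precedes it below -/
import Mathlib

section
/- For every natural number n, the total weighted number of partitions of an (n+1)-element set, ∑_{k=1}^{n+1} S(n+1,k) (k-1)!, is bounded above by n! · e^{n+2}. -/
/-- Stirling numbers of the second kind. -/
def stirlingSecond : ℕ → ℕ → ℕ
  | 0, 0 => 1
  | 0, _ + 1 => 0
  | _ + 1, 0 => 0
  | n + 1, k + 1 => (k + 1) * stirlingSecond n (k + 1) + stirlingSecond n k

lemma stirling_eq_zero : ∀ n k : ℕ, n < k → stirlingSecond n k = 0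
  | 0, _ + 1, _ => rfl
  | n + 1, k + 1, h => by
      have h1 : stirlingSecond n (k + 1) = 0 := stirling_eq_zero n (k + 1) (by omega)
      have h2 : stirlingSecond n k = 0 := stirling_eq_zero n k (by omega)
      show (k + 1) * stirlingSecond n (k + 1) + stirlingSecond n k = 0
      rw [h1, h2]; simp

/-- Auxiliary weighted sum `∑ k! S(n,k)`. -/
def aFub (n : ℕ) : ℕ := ∑ k ∈ Finset.range (n + 1), k.factorial * stirlingSecond n k

lemma sum_shift (n : ℕ) :
    ∑ j ∈ Finset.range (n + 1), (j + 1).factorial * stirlingSecond n (j + 1) ≤ aFub n := by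
  have h1 : (∑ k ∈ Finset.range (n + 2), k.factorial * stirlingSecond n k)
      = (∑ j ∈ Finset.range (n + 1), (j + 1).factorial * stirlingSecond n (j + 1))
        + Nat.factorial 0 * stirlingSecond n 0 :=
    Finset.sum_range_succ' (fun k => k.factorial * stirlingSecond n k) (n + 1)
  have h2 : (∑ k ∈ Finset.range (n + 2), k.factorial * stirlingSecond n k) = aFub n := by
    rw [Finset.sum_range_succ, stirling_eq_zero n (n + 1) (by omega)]
    simp [aFub]
  omega

lemma aFub_succ_le (n : ℕ) : aFub (n + 1) ≤ 2 * (n + 1) * aFub n := by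
  have key : aFub (n + 1)
      = ∑ j ∈ Finset.range (n + 1), (j + 1).factorial * stirlingSecond (n + 1) (j + 1) := by
    have h1 : aFub (n + 1)
        = (∑ j ∈ Finset.range (n + 1), (j + 1).factorial * stirlingSecond (n + 1) (j + 1))
          + Nat.factorial 0 * stirlingSecond (n + 1) 0 :=
      Finset.sum_range_succ' (fun k => k.factorial * stirlingSecond (n + 1) k) (n + 1)
    have h0 : stirlingSecond (n + 1) 0 = 0 := rfl
    rw [h1, h0]; simp
  rw [key]
  have step : ∀ j ∈ Finset.range (n + 1),
      (j + 1).factorial * stirlingSecond (n + 1) (j + 1)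
        ≤ (n + 1) * ((j + 1).factorial * stirlingSecond n (j + 1))
          + (n + 1) * (j.factorial * stirlingSecond n j) := by
    intro j hj
    have hj' : j + 1 ≤ n + 1 := Finset.mem_range.mp hj
    have hrec : stirlingSecond (n + 1) (j + 1)
        = (j + 1) * stirlingSecond n (j + 1) + stirlingSecond n j := rfl
    have hfact : (j + 1).factorial = (j + 1) * j.factorial := rfl
    rw [hrec]
    have e1 : (j + 1).factorial * ((j + 1) * stirlingSecond n (j + 1) + stirlingSecond n j)
        = (j + 1) * ((j + 1).factorial * stirlingSecond n (j + 1))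
          + (j + 1) * (j.factorial * stirlingSecond n j) := by
      rw [hfact]; ring
    rw [e1]
    exact Nat.add_le_add (Nat.mul_le_mul hj' le_rfl) (Nat.mul_le_mul hj' le_rfl)
  calc ∑ j ∈ Finset.range (n + 1), (j + 1).factorial * stirlingSecond (n + 1) (j + 1)
      ≤ ∑ j ∈ Finset.range (n + 1),
          ((n + 1) * ((j + 1).factorial * stirlingSecond n (j + 1))
            + (n + 1) * (j.factorial * stirlingSecond n j)) := Finset.sum_le_sum step
    _ = (n + 1) * (∑ j ∈ Finset.range (n + 1), (j + 1).factorial * stirlingSecond n (j + 1))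
          + (n + 1) * (∑ j ∈ Finset.range (n + 1), j.factorial * stirlingSecond n j) := by
        rw [Finset.sum_add_distrib, Finset.mul_sum, Finset.mul_sum]
    _ ≤ (n + 1) * aFub n + (n + 1) * aFub n := by
        have h2 : (∑ j ∈ Finset.range (n + 1), j.factorial * stirlingSecond n j) = aFub n := rfl
        exact Nat.add_le_add (Nat.mul_le_mul le_rfl (sum_shift n))
          (Nat.mul_le_mul le_rfl (le_of_eq h2))
    _ = 2 * (n + 1) * aFub n := by ring

lemma aFub_le (n : ℕ) : aFub n ≤ 2 ^ n * n.factorial := by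
  induction n with
  | zero => simp [aFub, stirlingSecond]
  | succ n ih =>
      calc aFub (n + 1) ≤ 2 * (n + 1) * aFub n := aFub_succ_le n
        _ ≤ 2 * (n + 1) * (2 ^ n * n.factorial) := Nat.mul_le_mul le_rfl ih
        _ = 2 ^ (n + 1) * (n + 1).factorial := by
            rw [Nat.factorial_succ]; ring

lemma c_le (n : ℕ) :
    (∑ k ∈ Finset.Icc 1 (n + 1), stirlingSecond (n + 1) k * (k - 1).factorial)
      ≤ 2 * aFub n := by
  have hre : (∑ k ∈ Finset.Icc 1 (n + 1), stirlingSecond (n + 1) k * (k - 1).factorial)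
      = ∑ j ∈ Finset.range (n + 1), stirlingSecond (n + 1) (1 + j) * (1 + j - 1).factorial := by
    rw [show Finset.Icc 1 (n + 1) = Finset.Ico 1 (n + 2) by
        ext x; simp [Finset.mem_Icc, Finset.mem_Ico]; omega,
      Finset.sum_Ico_eq_sum_range]
    norm_num
  rw [hre]
  have step : ∀ j ∈ Finset.range (n + 1),
      stirlingSecond (n + 1) (1 + j) * (1 + j - 1).factorial
        = (j + 1).factorial * stirlingSecond n (j + 1) + j.factorial * stirlingSecond n j := by
    intro j _
    have h1 : 1 + j = j + 1 := by omega
    rw [h1]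
    have h2 : j + 1 - 1 = j := rfl
    rw [h2]
    have hrec : stirlingSecond (n + 1) (j + 1)
        = (j + 1) * stirlingSecond n (j + 1) + stirlingSecond n j := rfl
    have hfact : (j + 1).factorial = (j + 1) * j.factorial := rfl
    rw [hrec, hfact]; ring
  rw [Finset.sum_congr rfl step, Finset.sum_add_distrib]
  have h3 : (∑ j ∈ Finset.range (n + 1), j.factorial * stirlingSecond n j) = aFub n := rfl
  have h4 := sum_shift n
  omega

/-- The total weighted number of partitions of an `(n+1)`-element set,
`∑_{k=1}^{n+1} S(n+1,k) (k-1)!`, is bounded above by `n! · e^{n+2}`. -/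
theorem stmt2 (n : ℕ) :
    (∑ k ∈ Finset.Icc 1 (n + 1),
        (stirlingSecond (n + 1) k : ℝ) * ((k - 1).factorial : ℝ))
      ≤ (n.factorial : ℝ) * Real.exp ((n : ℝ) + 2) := by
  have hcast : (∑ k ∈ Finset.Icc 1 (n + 1),
        (stirlingSecond (n + 1) k : ℝ) * ((k - 1).factorial : ℝ))
      = ((∑ k ∈ Finset.Icc 1 (n + 1), stirlingSecond (n + 1) k * (k - 1).factorial : ℕ) : ℝ) := by
    push_cast; rfl
  rw [hcast]
  have h1 : (∑ k ∈ Finset.Icc 1 (n + 1), stirlingSecond (n + 1) k * (k - 1).factorial)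
      ≤ 2 ^ (n + 1) * n.factorial := by
    calc (∑ k ∈ Finset.Icc 1 (n + 1), stirlingSecond (n + 1) k * (k - 1).factorial)
        ≤ 2 * aFub n := c_le n
      _ ≤ 2 * (2 ^ n * n.factorial) := Nat.mul_le_mul le_rfl (aFub_le n)
      _ = 2 ^ (n + 1) * n.factorial := by ring
  have h1R : ((∑ k ∈ Finset.Icc 1 (n + 1),
        stirlingSecond (n + 1) k * (k - 1).factorial : ℕ) : ℝ)
      ≤ (2 : ℝ) ^ (n + 1) * (n.factorial : ℝ) := by
    calc ((∑ k ∈ Finset.Icc 1 (n + 1),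
          stirlingSecond (n + 1) k * (k - 1).factorial : ℕ) : ℝ)
        ≤ ((2 ^ (n + 1) * n.factorial : ℕ) : ℝ) := by exact_mod_cast h1
      _ = (2 : ℝ) ^ (n + 1) * (n.factorial : ℝ) := by push_cast; ring
  have hexp : (2 : ℝ) ^ (n + 1) ≤ Real.exp ((n : ℝ) + 2) := by
    have h2e : (2 : ℝ) ≤ Real.exp 1 := by
      have := Real.add_one_le_exp (1 : ℝ); linarith
    calc (2 : ℝ) ^ (n + 1) ≤ (Real.exp 1) ^ (n + 1) :=
          pow_le_pow_left₀ (by norm_num) h2e (n + 1)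
      _ = Real.exp ((n + 1 : ℕ) : ℝ) := by rw [Real.exp_one_pow]
      _ ≤ Real.exp ((n : ℝ) + 2) := by
          apply Real.exp_le_exp.mpr; push_cast; linarith
  calc ((∑ k ∈ Finset.Icc 1 (n + 1),
        stirlingSecond (n + 1) k * (k - 1).factorial : ℕ) : ℝ)
      ≤ (2 : ℝ) ^ (n + 1) * (n.factorial : ℝ) := h1R
    _ ≤ Real.exp ((n : ℝ) + 2) * (n.factorial : ℝ) := by
        apply mul_le_mul_of_nonneg_right hexp (by positivity)
    _ = (n.factorial : ℝ) * Real.exp ((n : ℝ) + 2) := by ring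
end

section
/- Let f = (0, f₁, …) and g = (0, g₁, …) be sequences of integrable symmetric functions with only finitely many nonzero components, and define (e^𝔞 f)₀ = ∑_{n≥0} (1/n!) ∫ f_n(x₁,…,x_n) dx₁…dx_n. Then (e^𝔞 (f ★ g))₀ = (e^𝔞 f)₀ · (e^𝔞 g)₀. -/
open MeasureTheory

set_option synthInstance.maxSize 1000

/-- The one-particle phase space `ℝ³ × ℝ³`. -/
abbrev PhaseSpace := EuclideanSpace ℝ (Fin 3) × EuclideanSpace ℝ (Fin 3)

/-- Restriction of a tuple of particle variables to a subset `Y` of the indices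
(in increasing order). -/
def restrictTo {s : ℕ} (Y : Finset (Fin s)) (x : Fin s → PhaseSpace) :
    Fin Y.card → PhaseSpace :=
  fun i => x (Y.orderIsoOfFin rfl i)

/-- The Ruelle ★-product on sequences of functions of particle variables:
`(f ★ g)_s(x₁,…,x_s) = ∑_{Y ⊆ {1,…,s}} f_{|Y|}(x_Y) g_{s−|Y|}(x_{Yᶜ})`. -/
def seqStar (f g : ∀ n : ℕ, (Fin n → PhaseSpace) → ℝ) :
    ∀ s : ℕ, (Fin s → PhaseSpace) → ℝ :=
  fun s x => ∑ Y ∈ (Finset.univ : Finset (Fin s)).powerset,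
    f Y.card (restrictTo Y x) * g Yᶜ.card (restrictTo Yᶜ x)

/-- The zeroth component of `e^𝔞 f`: `(e^𝔞 f)₀ = ∑_{n≥0} (1/n!) ∫ f_n dx₁…dx_n`. -/
noncomputable def grandFunctional (f : ∀ n : ℕ, (Fin n → PhaseSpace) → ℝ) : ℝ :=
  ∑' n : ℕ, (1 / (n.factorial : ℝ)) * ∫ x : Fin n → PhaseSpace, f n x

instance : SigmaFinite (volume : Measure PhaseSpace) :=
  inferInstanceAs (SigmaFinite ((volume : Measure (EuclideanSpace ℝ (Fin 3))).prod volume))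

/-- Splitting of `Fin s` along a subset `Y`. -/
noncomputable def splitEquiv {s : ℕ} (Y : Finset (Fin s)) :
    Fin Y.card ⊕ Fin Yᶜ.card ≃ Fin s := by
  refine Equiv.ofBijective
    (Sum.elim (fun i => (Y.orderIsoOfFin rfl i : Fin s))
      (fun i => (Yᶜ.orderIsoOfFin rfl i : Fin s)))
    ((Fintype.bijective_iff_injective_and_card _).2 ⟨?_, by simp⟩)
  rintro (i | i) (j | j) h
  · simp only [Sum.elim_inl] at h
    exact congrArg Sum.inl ((Y.orderIsoOfFin rfl).injective (Subtype.ext h))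
  · exfalso
    have h1 := (Y.orderIsoOfFin rfl i).2
    have h2 := (Yᶜ.orderIsoOfFin rfl j).2
    simp only [Sum.elim_inl, Sum.elim_inr] at h
    rw [h] at h1
    exact (Finset.mem_compl.1 h2) h1
  · exfalso
    have h1 := (Y.orderIsoOfFin rfl j).2
    have h2 := (Yᶜ.orderIsoOfFin rfl i).2
    simp only [Sum.elim_inl, Sum.elim_inr] at h
    rw [h] at h2
    exact (Finset.mem_compl.1 h2) h1
  · simp only [Sum.elim_inr] at h
    exact congrArg Sum.inr ((Yᶜ.orderIsoOfFin rfl).injective (Subtype.ext h))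

/-- The measurable equivalence splitting the `s`-particle space along `Y`. -/
noncomputable def splitMap {s : ℕ} (Y : Finset (Fin s)) :
    ((Fin Y.card → PhaseSpace) × (Fin Yᶜ.card → PhaseSpace)) ≃ᵐ (Fin s → PhaseSpace) :=
  (MeasurableEquiv.sumPiEquivProdPi (fun _ => PhaseSpace)).symm.trans
    (MeasurableEquiv.piCongrLeft (fun _ => PhaseSpace) (splitEquiv Y))

lemma splitMap_measurePreserving {s : ℕ} (Y : Finset (Fin s)) :
    MeasurePreserving (splitMap Y) volume (volume : Measure (Fin s → PhaseSpace)) := by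
  have h1 := volume_measurePreserving_sumPiEquivProdPi_symm
    (fun _ : Fin Y.card ⊕ Fin Yᶜ.card => PhaseSpace)
  have h2 := volume_measurePreserving_piCongrLeft
    (fun _ : Fin s => PhaseSpace) (splitEquiv Y)
  have := h2.comp h1
  exact this

lemma restrictTo_splitMap_left {s : ℕ} (Y : Finset (Fin s))
    (p : (Fin Y.card → PhaseSpace) × (Fin Yᶜ.card → PhaseSpace)) :
    restrictTo Y (splitMap Y p) = p.1 := by
  funext i
  have : (Y.orderIsoOfFin rfl i : Fin s) = splitEquiv Y (Sum.inl i) := rfl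
  simp only [restrictTo, this, splitMap, MeasurableEquiv.trans_apply,
    MeasurableEquiv.piCongrLeft_apply_apply, MeasurableEquiv.coe_sumPiEquivProdPi_symm,
    Equiv.sumPiEquivProdPi_symm_apply]

lemma restrictTo_splitMap_right {s : ℕ} (Y : Finset (Fin s))
    (p : (Fin Y.card → PhaseSpace) × (Fin Yᶜ.card → PhaseSpace)) :
    restrictTo Yᶜ (splitMap Y p) = p.2 := by
  funext i
  have : (Yᶜ.orderIsoOfFin rfl i : Fin s) = splitEquiv Y (Sum.inr i) := rfl
  simp only [restrictTo, this, splitMap, MeasurableEquiv.trans_apply,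
    MeasurableEquiv.piCongrLeft_apply_apply, MeasurableEquiv.coe_sumPiEquivProdPi_symm,
    Equiv.sumPiEquivProdPi_symm_apply]

lemma integral_restrict_mul {s : ℕ} (Y : Finset (Fin s))
    (F : (Fin Y.card → PhaseSpace) → ℝ) (G : (Fin Yᶜ.card → PhaseSpace) → ℝ) :
    ∫ x : Fin s → PhaseSpace, F (restrictTo Y x) * G (restrictTo Yᶜ x)
      = (∫ y, F y) * (∫ z, G z) := by
  rw [← (splitMap_measurePreserving Y).integral_comp']
  simp_rw [restrictTo_splitMap_left, restrictTo_splitMap_right]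
  rw [show (volume : Measure ((Fin Y.card → PhaseSpace) × (Fin Yᶜ.card → PhaseSpace)))
      = (volume : Measure (Fin Y.card → PhaseSpace)).prod volume from rfl]
  exact integral_prod_mul F G

lemma integrable_restrict_mul {s : ℕ} (Y : Finset (Fin s))
    {F : (Fin Y.card → PhaseSpace) → ℝ} {G : (Fin Yᶜ.card → PhaseSpace) → ℝ}
    (hF : Integrable F) (hG : Integrable G) :
    Integrable (fun x : Fin s → PhaseSpace => F (restrictTo Y x) * G (restrictTo Yᶜ x)) := by
  rw [← (splitMap_measurePreserving Y).integrable_comp_emb (splitMap Y).measurableEmbedding]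
  have : (fun x : Fin s → PhaseSpace => F (restrictTo Y x) * G (restrictTo Yᶜ x)) ∘ (splitMap Y)
      = fun p => F p.1 * G p.2 := by
    funext p
    simp [Function.comp, restrictTo_splitMap_left, restrictTo_splitMap_right]
  rw [this]
  rw [show (volume : Measure ((Fin Y.card → PhaseSpace) × (Fin Yᶜ.card → PhaseSpace)))
      = (volume : Measure (Fin Y.card → PhaseSpace)).prod volume from rfl]
  exact hF.mul_prod hG

lemma integral_seqStar (f g : ∀ n : ℕ, (Fin n → PhaseSpace) → ℝ)
    (hfint : ∀ n, Integrable (f n)) (hgint : ∀ n, Integrable (g n)) (s : ℕ) :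
    ∫ x : Fin s → PhaseSpace, seqStar f g s x
      = ∑ k ∈ Finset.range (s + 1),
          (s.choose k : ℝ) * ((∫ y : Fin k → PhaseSpace, f k y)
            * (∫ z : Fin (s - k) → PhaseSpace, g (s - k) z)) := by
  unfold seqStar
  rw [integral_finset_sum _ (fun Y _ => integrable_restrict_mul Y (hfint _) (hgint _))]
  have hcompl : ∀ Y : Finset (Fin s), Yᶜ.card = s - Y.card := by
    intro Y; rw [Finset.card_compl, Fintype.card_fin]
  have key : ∀ Y : Finset (Fin s),
      ∫ x : Fin s → PhaseSpace, f Y.card (restrictTo Y x) * g Yᶜ.card (restrictTo Yᶜ x)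
        = (∫ y : Fin Y.card → PhaseSpace, f Y.card y)
            * (∫ z : Fin (s - Y.card) → PhaseSpace, g (s - Y.card) z) := by
    intro Y
    rw [integral_restrict_mul]
    congr 1
    rw [hcompl Y]
  simp_rw [key]
  have hps := Finset.sum_powerset_apply_card
    (fun k => (∫ y : Fin k → PhaseSpace, f k y) * (∫ z : Fin (s - k) → PhaseSpace, g (s - k) z))
    (x := (Finset.univ : Finset (Fin s)))
  simp only [Finset.card_univ, Fintype.card_fin, nsmul_eq_mul] at hps
  rw [← hps]

/-- For sequences `f = (0, f₁, …)`, `g = (0, g₁, …)` of integrable symmetric functions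
with only finitely many nonzero components, `(e^𝔞 (f ★ g))₀ = (e^𝔞 f)₀ · (e^𝔞 g)₀`. -/
theorem stmt12 (f g : ∀ n : ℕ, (Fin n → PhaseSpace) → ℝ)
    (hf0 : f 0 = 0) (hg0 : g 0 = 0)
    (hfint : ∀ n, Integrable (f n)) (hgint : ∀ n, Integrable (g n))
    (hfsym : ∀ n (σ : Equiv.Perm (Fin n)) (x : Fin n → PhaseSpace), f n (x ∘ σ) = f n x)
    (hgsym : ∀ n (σ : Equiv.Perm (Fin n)) (x : Fin n → PhaseSpace), g n (x ∘ σ) = g n x)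
    (hffin : ∃ N, ∀ n, N ≤ n → f n = 0) (hgfin : ∃ N, ∀ n, N ≤ n → g n = 0) :
    grandFunctional (seqStar f g) = grandFunctional f * grandFunctional g := by
  obtain ⟨N, hN⟩ := hffin
  obtain ⟨M, hM⟩ := hgfin
  set A : ℕ → ℝ := fun n => (1 / (n.factorial : ℝ)) * ∫ x : Fin n → PhaseSpace, f n x with hA
  set B : ℕ → ℝ := fun n => (1 / (n.factorial : ℝ)) * ∫ x : Fin n → PhaseSpace, g n x with hB
  have hAz : ∀ n ∉ Finset.range N, A n = 0 := by
    intro n hn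
    simp only [Finset.mem_range, not_lt] at hn
    simp [hA, hN n hn]
  have hBz : ∀ n ∉ Finset.range M, B n = 0 := by
    intro n hn
    simp only [Finset.mem_range, not_lt] at hn
    simp [hB, hM n hn]
  have hSA : Summable A := summable_of_ne_finset_zero hAz
  have hSB : Summable B := summable_of_ne_finset_zero hBz
  have hSAB : Summable (fun p : ℕ × ℕ => A p.1 * B p.2) := by
    apply summable_of_ne_finset_zero (s := Finset.range N ×ˢ Finset.range M)
    intro p hp
    rw [Finset.mem_product, not_and_or] at hp
    rcases hp with hp | hp
    · rw [hAz _ hp, zero_mul]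
    · rw [hBz _ hp, mul_zero]
  have hRHS : grandFunctional f * grandFunctional g
      = ∑' n, ∑ kl ∈ Finset.HasAntidiagonal.antidiagonal n, A kl.1 * B kl.2 :=
    Summable.tsum_mul_tsum_eq_tsum_sum_antidiagonal hSA hSB hSAB
  rw [hRHS]
  unfold grandFunctional
  apply tsum_congr
  intro s
  rw [integral_seqStar f g hfint hgint s, Finset.mul_sum,
    Finset.Nat.sum_antidiagonal_eq_sum_range_succ_mk]
  apply Finset.sum_congr rfl
  intro k hk
  have hks : k ≤ s := Nat.lt_succ_iff.1 (Finset.mem_range.1 hk)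
  simp only [hA, hB]
  have hfact : (s.choose k : ℝ) * (k.factorial : ℝ) * ((s - k).factorial : ℝ)
      = (s.factorial : ℝ) := by
    exact_mod_cast congrArg (Nat.cast (R := ℝ)) (Nat.choose_mul_factorial_mul_factorial hks)
  have h1 : (k.factorial : ℝ) ≠ 0 := Nat.cast_ne_zero.2 k.factorial_ne_zero
  have h2 : ((s - k).factorial : ℝ) ≠ 0 := Nat.cast_ne_zero.2 (s - k).factorial_ne_zero
  have h3 : (s.factorial : ℝ) ≠ 0 := Nat.cast_ne_zero.2 s.factorial_ne_zero
  field_simp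
  linear_combination (∫ x : Fin k → PhaseSpace, f k x) *
    (∫ x : Fin (s - k) → PhaseSpace, g (s - k) x) * hfact
end
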